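/- arXiv:1107.0323 — 4 statements merged into one kernel-verified Lean document; each statement's English description precedes it below -/
import Mathlib

section
/- For every real x > 0 and every positive integer N, the alternating asymptotic bounds e^{−x}·∑_{k=0}^{2N−1} (−1)^k·k!/x^{k+1} < ∫_x^∞ e^{−t}/t dt < e^{−x}·∑_{k=0}^{2N} (−1)^k·k!/x^{k+1} hold. -/
open Real Set Filter MeasureTheory

/-- `E x = ∫_x^∞ e^{-t}/t dt`, so that `Ei(-x) = -E x` for `x > 0`. -/
noncomputable def expInt (x : ℝ) : ℝ := ∫ t in Set.Ioi x, Real.exp (-t) / t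

/-! Integrating `e^{-t}/t^n` by parts lowers it to `e^{-x}/x^n` minus `n` times the integral of
`e^{-t}/t^{n+1}`. Iterating from `n = 1` writes `E x` as the first `m` terms of the asymptotic
series plus the remainder `(-1)^m m! ∫_x^∞ e^{-t}/t^{m+1} dt`, whose integral is positive, so the
partial sums alternately under- and overshoot `E x`. -/

noncomputable def expDivPowIntegral (n : ℕ) (x : ℝ) : ℝ := ∫ t in Ioi x, exp (-t) / t ^ n

section

variable {x : ℝ}

open Nat

lemma integrableOn_exp_neg_div_pow_Ioi (n : ℕ) (hx : 0 < x) :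
    IntegrableOn (fun t => exp (-t) / t ^ n) (Ioi x) := by
  have hdom : IntegrableOn (fun t => exp (-t) / x ^ n) (Ioi x) := by
    simpa [IntegrableOn] using (exp_neg_integrableOn_Ioi x one_pos).div_const (x ^ n)
  refine hdom.mono' ?_ ?_
  · refine ContinuousOn.aestronglyMeasurable ?_ measurableSet_Ioi
    exact (continuous_exp.comp continuous_neg).continuousOn.div (continuous_pow n).continuousOn
      fun t ht => pow_ne_zero _ (hx.trans ht).ne'
  · filter_upwards [ae_restrict_mem measurableSet_Ioi] with t ht
    rw [norm_of_nonneg (by have := hx.trans ht; positivity)]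
    exact div_le_div_of_nonneg_left (exp_pos _).le (by positivity) (pow_le_pow_left₀ hx.le ht.le n)

lemma expDivPowIntegral_pos (n : ℕ) (hx : 0 < x) : 0 < expDivPowIntegral n x := by
  rw [expDivPowIntegral, setIntegral_pos_iff_support_of_nonneg_ae _
    (integrableOn_exp_neg_div_pow_Ioi n hx)]
  · have hsupp : Ioi x ⊆ Function.support (fun t => exp (-t) / t ^ n) ∩ Ioi x :=
      fun t ht => ⟨(div_pos (exp_pos _) (pow_pos (hx.trans ht) n)).ne', ht⟩
    refine lt_of_lt_of_le ?_ (measure_mono hsupp)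
    simp
  · filter_upwards [ae_restrict_mem measurableSet_Ioi] with t ht
    have := hx.trans ht
    positivity

lemma hasDerivAt_neg_exp_neg_div_pow (n : ℕ) {t : ℝ} (ht : t ≠ 0) :
    HasDerivAt (fun t => -(exp (-t) / t ^ (n + 1)))
      (exp (-t) / t ^ (n + 1) + (n + 1) * (exp (-t) / t ^ (n + 2))) t := by
  have hexp : HasDerivAt (fun t : ℝ => exp (-t)) (-exp (-t)) t := by
    simpa using (hasDerivAt_neg t).exp
  have hpow : HasDerivAt (fun t : ℝ => t ^ (n + 1)) ((n + 1) * t ^ n) t := by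
    simpa using hasDerivAt_pow (n + 1) t
  refine (hexp.div hpow (pow_ne_zero _ ht)).neg.congr_deriv ?_
  rw [← pow_mul, pow_succ, pow_succ]
  field_simp
  ring

lemma tendsto_exp_neg_div_pow_atTop (n : ℕ) :
    Tendsto (fun t => exp (-t) / t ^ (n + 1)) atTop (nhds 0) := by
  have h : Tendsto (fun t => t ^ (n + 1) * exp t) atTop atTop :=
    (tendsto_pow_atTop n.succ_ne_zero).atTop_mul_atTop₀ tendsto_exp_atTop
  simpa [Function.comp_def, exp_neg, div_eq_mul_inv, mul_inv_rev] using
    tendsto_inv_atTop_zero.comp h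

/-- Integration by parts, with `-e^{-t}/t^{n+1}` as antiderivative. -/
lemma expDivPowIntegral_succ (n : ℕ) (hx : 0 < x) :
    expDivPowIntegral (n + 1) x =
      exp (-x) / x ^ (n + 1) - (n + 1) * expDivPowIntegral (n + 2) x := by
  have hint := integrableOn_exp_neg_div_pow_Ioi (n + 1) hx
  have hint' := (integrableOn_exp_neg_div_pow_Ioi (n + 2) hx).const_mul ((n : ℝ) + 1)
  have hparts := integral_Ioi_of_hasDerivAt_of_tendsto
    (f := fun t => -(exp (-t) / t ^ (n + 1))) ?_
    (fun t ht => hasDerivAt_neg_exp_neg_div_pow n (hx.trans ht).ne') (hint.add hint')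
    (by simpa using (tendsto_exp_neg_div_pow_atTop n).neg)
  · rw [integral_add hint hint', integral_const_mul] at hparts
    rw [expDivPowIntegral, expDivPowIntegral]
    linarith
  · refine ContinuousWithinAt.neg ?_
    exact (continuous_exp.comp continuous_neg).continuousWithinAt.div
      (continuous_pow _).continuousWithinAt (pow_ne_zero _ hx.ne')

lemma expInt_eq_sum_add_remainder (hx : 0 < x) (m : ℕ) :
    expInt x = exp (-x) * ∑ k ∈ Finset.range m, (-1 : ℝ) ^ k * (k ! : ℝ) / x ^ (k + 1)
      + (-1 : ℝ) ^ m * (m ! : ℝ) * expDivPowIntegral (m + 1) x := by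
  induction m with
  | zero => simp [expInt, expDivPowIntegral]
  | succ m ih =>
    rw [ih, expDivPowIntegral_succ m hx, Finset.sum_range_succ]
    push_cast [Nat.factorial_succ]
    ring

end

theorem expInt_alternating_bounds_general (x : ℝ) (hx : 0 < x) (N : ℕ) :
    Real.exp (-x) * ∑ k ∈ Finset.range (2 * N),
        (-1 : ℝ) ^ k * (Nat.factorial k : ℝ) / x ^ (k + 1) < expInt x ∧
    expInt x < Real.exp (-x) * ∑ k ∈ Finset.range (2 * N + 1),
        (-1 : ℝ) ^ k * (Nat.factorial k : ℝ) / x ^ (k + 1) := by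
  have hrem (m : ℕ) : 0 < (Nat.factorial m : ℝ) * expDivPowIntegral (m + 1) x :=
    mul_pos (by positivity) (expDivPowIntegral_pos _ hx)
  constructor
  · rw [expInt_eq_sum_add_remainder hx (2 * N), (even_two_mul N).neg_one_pow, one_mul]
    linarith [hrem (2 * N)]
  · rw [expInt_eq_sum_add_remainder hx (2 * N + 1),
      (odd_two_mul_add_one N).neg_one_pow (α := ℝ)]
    linarith [hrem (2 * N + 1)]

/-- The classical alternating asymptotic enclosure for `-Ei(-x) = ∫_x^∞ e^{-t}/t dt`. -/
theorem expInt_alternating_bounds (x : ℝ) (hx : 0 < x) (N : ℕ) (hN : 0 < N) :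
    Real.exp (-x) * ∑ k ∈ Finset.range (2 * N),
        (-1 : ℝ) ^ k * (Nat.factorial k : ℝ) / x ^ (k + 1) < expInt x ∧
    expInt x < Real.exp (-x) * ∑ k ∈ Finset.range (2 * N + 1),
        (-1 : ℝ) ^ k * (Nat.factorial k : ℝ) / x ^ (k + 1) :=
  expInt_alternating_bounds_general x hx N
end

section
/- For every real r ≥ 5/2, the function g(r) := r^{−1}·(e^{−r}·E(2r) − 2·e^{r}·E(4r)) satisfies −e^{−3r}/(8r³) < g(r) < 0, and moreover the finer lower bound g(r) > (e^{−3r}/r³)·(−1/8 + 3/(16r) − 21/(64r²) + 45/(64r³) − 465/(256r⁴)) holds. -/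
open Real Set Filter MeasureTheory

/-- `g(r) = r⁻¹ (e^{-r} E(2r) - 2 e^{r} E(4r))`. -/
noncomputable def gfun (r : ℝ) : ℝ :=
  r⁻¹ * (Real.exp (-r) * expInt (2 * r) - 2 * Real.exp r * expInt (4 * r))

/-!
With `F x = eˣ E(x)` we have `g(r) = e^{-3r} r⁻¹ (F(2r) - 2 F(4r))`. Integrating by parts,
`J_m(x) = ∫_x^∞ e^{-t} t^{-m} dt` satisfies `J_m + m J_{m+1} = e^{-x} x^{-m}`, which unrolls
into the asymptotic series `F(x) = ∑_{k<n} (-1)^k k!/x^{k+1} + (-1)^n n! eˣ J_{n+1}(x)`.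
Together with `x J_{m+1} ≤ J_m`, the recursion squeezes the remainder `eˣ J_m(x)` between
`x / (x^m (x+m))` and `(x+1) / (x^m (x+m+1))`. Truncating at `n = 3` for `F(2r)` and `n = 2`
for `F(4r)` gives `g < 0`; truncating at `n = 4` and `n = 6` and bounding the remainders gives
the finer lower bound, and the last step is an inequality between rational functions of `r`.
-/

open scoped Nat Topology

noncomputable def expIntPow (m : ℕ) (x : ℝ) : ℝ := ∫ t in Ioi x, exp (-t) / t ^ m

noncomputable def expIntAsymp (n : ℕ) (x : ℝ) : ℝ :=
  ∑ k ∈ Finset.range n, (-1) ^ k * k ! / x ^ (k + 1)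

section expIntPow

variable (m : ℕ) {x : ℝ}

lemma integrableOn_exp_neg_div_pow (hx : 0 < x) :
    IntegrableOn (fun t => exp (-t) / t ^ m) (Ioi x) := by
  have hexp : IntegrableOn (fun t => exp (-t) / x ^ m) (Ioi x) := by
    have := (exp_neg_integrableOn_Ioi x one_pos).div_const (x ^ m)
    simp only [neg_one_mul] at this
    exact this
  refine hexp.mono' ?_ ?_
  · exact (continuousOn_exp.comp continuousOn_neg (mapsTo_univ _ _) |>.div (continuousOn_pow m)
      fun t ht => (pow_pos (hx.trans ht) m).ne').aestronglyMeasurable measurableSet_Ioi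
  · refine (ae_restrict_iff' measurableSet_Ioi).2 (ae_of_all _ fun t ht => ?_)
    rw [norm_of_nonneg (by positivity [hx.trans ht])]
    gcongr
    exact ht.le

lemma expIntPow_add_mul_succ (hx : 0 < x) :
    expIntPow m x + m * expIntPow (m + 1) x = exp (-x) / x ^ m := by
  have hderiv : ∀ t ∈ Ici x, HasDerivAt (fun t => -(exp (-t) / t ^ m))
      (exp (-t) / t ^ m + m * (exp (-t) / t ^ (m + 1))) t := by
    intro t ht
    have ht0 : t ≠ 0 := (hx.trans_le ht).ne'
    refine (((hasDerivAt_neg t).exp.fun_div (hasDerivAt_pow m t)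
      (pow_ne_zero m ht0)).neg).congr_deriv ?_
    rcases m with _ | k
    · simp
    · rw [Nat.add_sub_cancel]
      field_simp
      ring
  have hlim : Tendsto (fun t => -(exp (-t) / t ^ m)) atTop (𝓝 0) := by
    rw [← neg_zero]
    refine (tendsto_of_tendsto_of_tendsto_of_le_of_le' tendsto_const_nhds
      tendsto_exp_neg_atTop_nhds_zero ?_ ?_).neg
    · filter_upwards [eventually_ge_atTop 0] with t ht
      positivity
    · filter_upwards [eventually_ge_atTop 1] with t ht
      exact div_le_self (exp_nonneg _) (one_le_pow₀ ht)
  have hf := integrableOn_exp_neg_div_pow m hx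
  have hg := (integrableOn_exp_neg_div_pow (m + 1) hx).const_mul (m : ℝ)
  rw [expIntPow, expIntPow, ← integral_const_mul, ← integral_add hf hg,
    integral_Ioi_of_hasDerivAt_of_tendsto' hderiv (hf.add hg) hlim]
  ring

lemma mul_expIntPow_succ_le (hx : 0 < x) : x * expIntPow (m + 1) x ≤ expIntPow m x := by
  rw [expIntPow, expIntPow, ← integral_const_mul]
  refine setIntegral_mono_on ((integrableOn_exp_neg_div_pow (m + 1) hx).const_mul x)
    (integrableOn_exp_neg_div_pow m hx) measurableSet_Ioi fun t ht => ?_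
  have ht0 : 0 < t := hx.trans ht
  have hsplit : x * (exp (-t) / t ^ (m + 1)) = x / t * (exp (-t) / t ^ m) := by
    rw [pow_succ]; field_simp
  rw [hsplit]
  exact mul_le_of_le_one_left (by positivity) ((div_le_one ht0).2 ht.le)

lemma exp_mul_expIntPow_add (hx : 0 < x) :
    exp x * expIntPow m x + m * (exp x * expIntPow (m + 1) x) = (x ^ m)⁻¹ := by
  have hexp : exp x * exp (-x) = 1 := by rw [← exp_add, add_neg_cancel, exp_zero]
  linear_combination exp x * expIntPow_add_mul_succ m hx + (x ^ m)⁻¹ * hexp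

lemma div_le_exp_mul_expIntPow (hx : 0 < x) :
    x / (x ^ m * (x + m)) ≤ exp x * expIntPow m x := by
  have hrec := exp_mul_expIntPow_add m hx
  have hmono := mul_le_mul_of_nonneg_left (mul_expIntPow_succ_le m hx) (exp_pos x).le
  have hxm : x ^ m * (x ^ m)⁻¹ = 1 := mul_inv_cancel₀ (pow_pos hx m).ne'
  rw [div_le_iff₀ (by positivity)]
  have hgap : exp x * expIntPow m x * (x ^ m * (x + m)) - x
      = m * x ^ m * (exp x * expIntPow m x - exp x * (x * expIntPow (m + 1) x)) := by
    linear_combination x ^ m * x * hrec + x * hxm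
  nlinarith [mul_nonneg (by positivity : (0 : ℝ) ≤ m * x ^ m) (sub_nonneg.2 hmono)]

lemma exp_mul_expIntPow_pos (hx : 0 < x) : 0 < exp x * expIntPow m x :=
  lt_of_lt_of_le (by positivity) (div_le_exp_mul_expIntPow m hx)

lemma exp_mul_expIntPow_le (hx : 0 < x) :
    exp x * expIntPow m x ≤ (x + 1) / (x ^ m * (x + m + 1)) := by
  have hrec := exp_mul_expIntPow_add m hx
  have hlow := div_le_exp_mul_expIntPow (m + 1) hx
  have hxm : x ^ m * (x ^ m)⁻¹ = 1 := mul_inv_cancel₀ (pow_pos hx m).ne'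
  rw [div_le_iff₀ (by positivity)] at hlow
  have hone : 1 ≤ x ^ m * (exp x * expIntPow (m + 1) x) * (x + m + 1) := by
    refine le_of_mul_le_mul_left ?_ hx
    push_cast at hlow
    linear_combination hlow
  rw [le_div_iff₀ (by positivity)]
  have hgap : x + 1 - exp x * expIntPow m x * (x ^ m * (x + m + 1))
      = m * (x ^ m * (exp x * expIntPow (m + 1) x) * (x + m + 1) - 1) := by
    linear_combination -(x + m + 1) * (x ^ m * hrec + hxm)
  nlinarith [mul_nonneg (Nat.cast_nonneg m : (0 : ℝ) ≤ m) (sub_nonneg.2 hone)]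

end expIntPow

section expInt

variable {n : ℕ} {x : ℝ}

lemma exp_mul_expInt_eq (n : ℕ) (hx : 0 < x) :
    exp x * expInt x = expIntAsymp n x + (-1) ^ n * n ! * (exp x * expIntPow (n + 1) x) := by
  induction n with
  | zero => simp [expIntAsymp, expInt, expIntPow]
  | succ n ih =>
    have hrec := exp_mul_expIntPow_add (n + 1) hx
    rw [ih, expIntAsymp, expIntAsymp, Finset.sum_range_succ, Nat.factorial_succ]
    push_cast at hrec ⊢
    linear_combination (-1) ^ n * n ! * hrec

lemma exp_mul_expInt_lt_expIntAsymp (hn : Odd n) (hx : 0 < x) :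
    exp x * expInt x < expIntAsymp n x := by
  rw [exp_mul_expInt_eq n hx, hn.neg_one_pow, neg_one_mul, neg_mul, ← sub_eq_add_neg,
    sub_lt_self_iff]
  exact mul_pos (by positivity) (exp_mul_expIntPow_pos (n + 1) hx)

lemma expIntAsymp_lt_exp_mul_expInt (hn : Even n) (hx : 0 < x) :
    expIntAsymp n x < exp x * expInt x := by
  rw [exp_mul_expInt_eq n hx, hn.neg_one_pow, one_mul, lt_add_iff_pos_right]
  exact mul_pos (by positivity) (exp_mul_expIntPow_pos (n + 1) hx)

lemma expIntAsymp_add_le_exp_mul_expInt (hn : Even n) (hx : 0 < x) :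
    expIntAsymp n x + n ! * (x / (x ^ (n + 1) * (x + (n + 1)))) ≤ exp x * expInt x := by
  rw [exp_mul_expInt_eq n hx, hn.neg_one_pow, one_mul]
  have := div_le_exp_mul_expIntPow (n + 1) hx
  push_cast at this
  gcongr

lemma exp_mul_expInt_le_expIntAsymp_add (hn : Even n) (hx : 0 < x) :
    exp x * expInt x ≤ expIntAsymp n x + n ! * ((x + 1) / (x ^ (n + 1) * (x + (n + 2)))) := by
  rw [exp_mul_expInt_eq n hx, hn.neg_one_pow, one_mul]
  have := exp_mul_expIntPow_le (n + 1) hx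
  push_cast at this
  rw [show x + (n + 2 : ℝ) = x + (n + 1) + 1 by ring]
  gcongr

end expInt

lemma gfun_eq (r : ℝ) :
    gfun r = exp (-3 * r) / r *
      (exp (2 * r) * expInt (2 * r) - 2 * (exp (4 * r) * expInt (4 * r))) := by
  have h2 : exp (-r) = exp (-3 * r) * exp (2 * r) := by rw [← exp_add]; ring_nf
  have h4 : exp r = exp (-3 * r) * exp (4 * r) := by rw [← exp_add]; ring_nf
  rw [gfun, h2, h4]
  ring

lemma gfun_neg {r : ℝ} (hr : 2 ≤ r) : gfun r < 0 := by
  have hr0 : 0 < r := by linarith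
  have h2 := exp_mul_expInt_lt_expIntAsymp (n := 3) ⟨1, rfl⟩ (by positivity : 0 < 2 * r)
  have h4 := expIntAsymp_lt_exp_mul_expInt (n := 2) even_two (by positivity : 0 < 4 * r)
  have hasymp : expIntAsymp 3 (2 * r) - 2 * expIntAsymp 2 (4 * r) = (2 - r) / (8 * r ^ 3) := by
    simp only [expIntAsymp, Finset.sum_range_succ, Finset.sum_range_zero]
    norm_num [Nat.factorial]
    field_simp
    ring
  have hneg : (2 - r) / (8 * r ^ 3) ≤ 0 :=
    div_nonpos_of_nonpos_of_nonneg (by linarith) (by positivity)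
  rw [gfun_eq]
  exact mul_neg_of_pos_of_neg (by positivity) (by linarith)

lemma gfun_lower {r : ℝ} (hr : 1 / 100 ≤ r) :
    (exp (-3 * r) / r ^ 3) *
        (-(1 / 8) + 3 / (16 * r) - 21 / (64 * r ^ 2) + 45 / (64 * r ^ 3)
          - 465 / (256 * r ^ 4)) < gfun r := by
  have hr0 : 0 < r := by linarith
  have h2 := expIntAsymp_add_le_exp_mul_expInt (n := 4) (by decide) (by positivity : 0 < 2 * r)
  have h4 := exp_mul_expInt_le_expIntAsymp_add (n := 6) (by decide) (by positivity : 0 < 4 * r)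
  norm_num [Nat.factorial] at h2 h4
  have hasymp : (expIntAsymp 4 (2 * r) + 24 * (2 * r / ((2 * r) ^ 5 * (2 * r + 5))))
      - 2 * (expIntAsymp 6 (4 * r) + 720 * ((4 * r + 1) / ((4 * r) ^ 7 * (4 * r + 8))))
      - (r ^ 2)⁻¹ * (-(1 / 8) + 3 / (16 * r) - 21 / (64 * r ^ 2) + 45 / (64 * r ^ 3)
        - 465 / (256 * r ^ 4))
      = (150720 * r ^ 2 + 299280 * r - 1800) / (4096 * r ^ 7 * (2 * r + 5) * (4 * r + 8)) := by
    simp only [expIntAsymp, Finset.sum_range_succ, Finset.sum_range_zero]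
    norm_num [Nat.factorial]
    field_simp
    ring
  have hgap :
      0 < (150720 * r ^ 2 + 299280 * r - 1800) / (4096 * r ^ 7 * (2 * r + 5) * (4 * r + 8)) :=
    div_pos (by nlinarith) (by positivity)
  rw [gfun_eq, show exp (-3 * r) / r ^ 3 = exp (-3 * r) / r * (r ^ 2)⁻¹ by field_simp, mul_assoc]
  refine mul_lt_mul_of_pos_left ?_ (by positivity)
  linarith

/-- Bounds for `g` on `[5/2, ∞)`: `-e^{-3r}/(8r³) < g(r) < 0`, together with the finer
lower bound `g(r) > (e^{-3r}/r³)(-1/8 + 3/(16r) - 21/(64r²) + 45/(64r³) - 465/(256r⁴))`. -/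
theorem gfun_bounds (r : ℝ) (hr : 5 / 2 ≤ r) :
    -(Real.exp (-3 * r) / (8 * r ^ 3)) < gfun r ∧ gfun r < 0 ∧
    (Real.exp (-3 * r) / r ^ 3) *
        (-(1 / 8) + 3 / (16 * r) - 21 / (64 * r ^ 2) + 45 / (64 * r ^ 3)
          - 465 / (256 * r ^ 4)) < gfun r := by
  have hr0 : 0 < r := by linarith
  have hfine := gfun_lower (r := r) (by linarith)
  have hcorrection : -(1 / 8 : ℝ) ≤ -(1 / 8) + 3 / (16 * r) - 21 / (64 * r ^ 2)
      + 45 / (64 * r ^ 3) - 465 / (256 * r ^ 4) := by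
    have hdiff : -(1 / 8) + 3 / (16 * r) - 21 / (64 * r ^ 2) + 45 / (64 * r ^ 3)
        - 465 / (256 * r ^ 4) - -(1 / 8)
        = (48 * r ^ 3 - 84 * r ^ 2 + 180 * r - 465) / (256 * r ^ 4) := by
      field_simp
      ring
    rw [← sub_nonneg, hdiff]
    exact div_nonneg (by nlinarith) (by positivity)
  refine ⟨?_, gfun_neg (by linarith), hfine⟩
  calc -(exp (-3 * r) / (8 * r ^ 3)) = exp (-3 * r) / r ^ 3 * -(1 / 8) := by ring
    _ ≤ _ := by gcongr
    _ < gfun r := hfine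
end

section
/- For every real r ≥ 5/2, one has |∫_r^∞ sinh(r−s)·s^{−2}·e^{−3s} ds| ≤ e^{−r}/8900; that is, the function N(e^{−·})(r) := ∫_r^∞ sinh(r−s)·s^{−2}·e^{−3s} ds satisfies sup_{r≥5/2} e^{r}·|N(e^{−·})(r)| ≤ 1/8900. -/
/-!
For `s ≥ r` the integrand is `-s⁻² sinh (s - r) e^{-3s} ≤ 0`, so `|N(e^{-·})(r)|` is the integral of
`s⁻² sinh (s - r) e^{-3s}`. Bounding `s⁻²` by `(5/2)⁻²` on `(r, r + 1/2]` and by `3⁻²` beyond leaves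
tail integrals of `sinh (s - r) e^{-3s}`, which are elementary, and gives
`e^{-3r} (1/50 - 11/225 (e^{-1}/4 - e^{-2}/8))`. With `e^{-2r} ≤ e^{-5}` this is `e^{-r}/8900` up to
about 2%; the cruder bound `s⁻² ≤ (5/2)⁻²` everywhere would give `e^{-3r}/50`, which is too large.
-/

open Real Set Filter MeasureTheory Topology

theorem setIntegral_Ioi_mul_le_of_le_of_le {μ : Measure ℝ} {w g : ℝ → ℝ} {a c A C : ℝ}
    (hac : a ≤ c) (hg : IntegrableOn g (Ioi a) μ) (hg0 : ∀ s ∈ Ioi a, 0 ≤ g s)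
    (hwg : IntegrableOn (fun s => w s * g s) (Ioi a) μ)
    (hA : ∀ s ∈ Ioc a c, w s ≤ A) (hC : ∀ s ∈ Ioi c, w s ≤ C) :
    ∫ s in Ioi a, w s * g s ∂μ ≤
      A * (∫ s in Ioi a, g s ∂μ - ∫ s in Ioi c, g s ∂μ) + C * ∫ s in Ioi c, g s ∂μ := by
  have hIoc : Ioc a c ⊆ Ioi a := Ioc_subset_Ioi_self
  have hIoi : Ioi c ⊆ Ioi a := Ioi_subset_Ioi hac
  rw [← setIntegral_sdiff measurableSet_Ioi hg hIoi, Ioi_sdiff_Ioi,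
    ← Ioc_union_Ioi_eq_Ioi hac, setIntegral_union Ioc_disjoint_Ioi_same measurableSet_Ioi
      (hwg.mono_set hIoc) (hwg.mono_set hIoi), ← integral_const_mul, ← integral_const_mul]
  gcongr ?_ + ?_
  · refine setIntegral_mono_on (hwg.mono_set hIoc) ((hg.mono_set hIoc).const_mul A)
      measurableSet_Ioc fun s hs => ?_
    exact mul_le_mul_of_nonneg_right (hA s hs) (hg0 s (hIoc hs))
  · refine setIntegral_mono_on (hwg.mono_set hIoi) ((hg.mono_set hIoi).const_mul C)
      measurableSet_Ioi fun s hs => ?_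
    exact mul_le_mul_of_nonneg_right (hC s hs) (hg0 s (hIoi hs))

theorem inv_sq_le_inv_sq {c s : ℝ} (hc : 0 < c) (hcs : c ≤ s) : (s ^ 2)⁻¹ ≤ (c ^ 2)⁻¹ :=
  inv_anti₀ (by positivity) (pow_le_pow_left₀ hc.le hcs 2)

theorem integrableOn_inv_sq_mul_Ioi {g : ℝ → ℝ} {c : ℝ} (hc : 0 < c)
    (hg : IntegrableOn g (Ioi c)) : IntegrableOn (fun s => (s ^ 2)⁻¹ * g s) (Ioi c) :=
  hg.bdd_mul (by fun_prop : Measurable fun s : ℝ => (s ^ 2)⁻¹).aestronglyMeasurable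
    ((ae_restrict_mem measurableSet_Ioi).mono fun s hs => by
      rw [norm_inv, norm_pow, norm_of_nonneg (hc.trans hs.out).le]
      exact inv_sq_le_inv_sq hc hs.out.le)

/-- From `2 sinh (s - r) exp (-k s) = exp ((1 - k) s - r) - exp (r - (k + 1) s)`. -/
noncomputable def sinhMulExpPrimitive (r k s : ℝ) : ℝ :=
  exp (r - (k + 1) * s) / (2 * (k + 1)) - exp ((1 - k) * s - r) / (2 * (k - 1))

theorem hasDerivAt_sinhMulExpPrimitive {r k : ℝ} (hk : 1 < k) (s : ℝ) :
    HasDerivAt (sinhMulExpPrimitive r k) (sinh (s - r) * exp (-k * s)) s := by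
  have h₁ : HasDerivAt (fun x => r - (k + 1) * x) (-(k + 1)) s := by
    simpa using ((hasDerivAt_id s).const_mul (k + 1)).const_sub r
  have h₂ : HasDerivAt (fun x => (1 - k) * x - r) (1 - k) s := by
    simpa using ((hasDerivAt_id s).const_mul (1 - k)).sub_const r
  refine ((h₁.exp.div_const (2 * (k + 1))).sub (h₂.exp.div_const (2 * (k - 1)))).congr_deriv ?_
  have e₁ : exp (r - (k + 1) * s) = exp (-(s - r)) * exp (-k * s) := by
    rw [← exp_add]; ring_nf
  have e₂ : exp ((1 - k) * s - r) = exp (s - r) * exp (-k * s) := by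
    rw [← exp_add]; ring_nf
  have hk₁ : k + 1 ≠ 0 := by linarith
  have hk₂ : k - 1 ≠ 0 := by linarith
  rw [e₁, e₂, sinh_eq]
  field_simp
  ring

theorem tendsto_sinhMulExpPrimitive_atTop {r k : ℝ} (hk : 1 < k) :
    Tendsto (sinhMulExpPrimitive r k) atTop (𝓝 0) := by
  have h₁ : Tendsto (fun s => exp (r - (k + 1) * s)) atTop (𝓝 0) :=
    tendsto_exp_comp_nhds_zero.2 <| (tendsto_atBot_add_const_left _ r
      (tendsto_id.const_mul_atTop_of_neg (by linarith : -(k + 1) < 0))).congr fun s => by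
        simp only [id]; ring
  have h₂ : Tendsto (fun s => exp ((1 - k) * s - r)) atTop (𝓝 0) :=
    tendsto_exp_comp_nhds_zero.2 <| tendsto_atBot_add_const_right _ (-r)
      (tendsto_id.const_mul_atTop_of_neg (by linarith : 1 - k < 0))
  unfold sinhMulExpPrimitive
  simpa using (h₁.div_const (2 * (k + 1))).sub (h₂.div_const (2 * (k - 1)))

theorem sinh_sub_mul_exp_nonneg {r k s : ℝ} (hrs : r ≤ s) : 0 ≤ sinh (s - r) * exp (-k * s) :=
  mul_nonneg (sinh_nonneg_iff.2 (sub_nonneg.2 hrs)) (exp_pos _).le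

theorem integrableOn_sinh_sub_mul_exp_Ioi {r k a : ℝ} (hk : 1 < k) (hra : r ≤ a) :
    IntegrableOn (fun s => sinh (s - r) * exp (-k * s)) (Ioi a) :=
  integrableOn_Ioi_deriv_of_nonneg' (fun s _ => hasDerivAt_sinhMulExpPrimitive hk s)
    (fun _ hs => sinh_sub_mul_exp_nonneg (hra.trans hs.out.le))
    (tendsto_sinhMulExpPrimitive_atTop hk)

theorem integral_sinh_sub_mul_exp_Ioi_add {r k d : ℝ} (hk : 1 < k) (hd : 0 ≤ d) :
    ∫ s in Ioi (r + d), sinh (s - r) * exp (-k * s) =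
      exp (-k * r) * (exp ((1 - k) * d) / (2 * (k - 1)) - exp (-(k + 1) * d) / (2 * (k + 1))) := by
  rw [integral_Ioi_of_hasDerivAt_of_nonneg' (fun s _ => hasDerivAt_sinhMulExpPrimitive hk s)
    (fun _ hs => sinh_sub_mul_exp_nonneg ((le_add_of_nonneg_right hd).trans hs.out.le))
    (tendsto_sinhMulExpPrimitive_atTop hk), sinhMulExpPrimitive]
  simp only [mul_sub, mul_div_assoc', ← exp_add]
  ring_nf

theorem abs_sinh_sub_div_sq_mul_exp {r s : ℝ} (k : ℝ) (hrs : r ≤ s) :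
    |sinh (r - s) / s ^ 2 * exp (-k * s)| = (s ^ 2)⁻¹ * (sinh (s - r) * exp (-k * s)) := by
  rw [abs_mul, abs_div, abs_sinh, abs_sub_comm, abs_of_nonneg (sub_nonneg.2 hrs),
    abs_of_nonneg (sq_nonneg s), abs_of_pos (exp_pos _)]
  ring

theorem exp_neg_mul_le_one_div_8900 {x : ℝ} (hx : 5 ≤ x) :
    exp (-x) * (1 / 50 - 11 / 225 * (exp (-1) / 4 - exp (-2) / 8)) ≤ 1 / 8900 := by
  have hl := exp_neg_one_gt_d9
  have hu := exp_neg_one_lt_d9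
  have hx5 : exp (-x) ≤ exp (-1) ^ 5 := by
    rw [← exp_nat_mul]
    exact exp_le_exp.2 (by push_cast; linarith)
  have h2 : exp (-2) = exp (-1) ^ 2 := by
    rw [← exp_nat_mul]
    norm_num
  rw [h2]
  set b := exp (-1)
  have hb5 : b ^ 5 ≤ 0.3679 ^ 5 := pow_le_pow_left₀ (by linarith) (by linarith) 5
  have hK : 1 / 50 - 11 / 225 * (b / 4 - b ^ 2 / 8) ≤
      1 / 50 - 11 / 225 * (0.3678 / 4 - 0.3678 ^ 2 / 8) := by
    nlinarith
  calc exp (-x) * (1 / 50 - 11 / 225 * (b / 4 - b ^ 2 / 8))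
      ≤ 0.3679 ^ 5 * (1 / 50 - 11 / 225 * (0.3678 / 4 - 0.3678 ^ 2 / 8)) :=
        mul_le_mul (hx5.trans hb5) hK (by nlinarith) (by norm_num)
    _ ≤ 1 / 8900 := by norm_num

/-- The Volterra-type integral `N(e^{-·})(r) = ∫_r^∞ sinh(r-s) s^{-2} e^{-3s} ds` satisfies
`sup_{r ≥ 5/2} e^{r} |N(e^{-·})(r)| ≤ 1/8900`, i.e. `|N(e^{-·})(r)| ≤ e^{-r}/8900` for all
`r ≥ 5/2`. -/
theorem volterra_exp_bound (r : ℝ) (hr : 5 / 2 ≤ r) :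
    |∫ s in Set.Ioi r, Real.sinh (r - s) / s ^ 2 * Real.exp (-3 * s)| ≤
      Real.exp (-r) / 8900 := by
  set g : ℝ → ℝ := fun s => sinh (s - r) * exp (-3 * s)
  have hg : IntegrableOn g (Ioi r) := integrableOn_sinh_sub_mul_exp_Ioi (by norm_num) le_rfl
  have hT₀ : ∫ s in Ioi r, g s = exp (-3 * r) / 8 := by
    have h := integral_sinh_sub_mul_exp_Ioi_add (r := r) (k := 3) (by norm_num) le_rfl
    rw [add_zero] at h
    rw [h]
    norm_num
    ring
  have hT₁ : ∫ s in Ioi (r + 1 / 2), g s = exp (-3 * r) * (exp (-1) / 4 - exp (-2) / 8) := by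
    rw [integral_sinh_sub_mul_exp_Ioi_add (by norm_num) (by norm_num)]
    norm_num
  calc |∫ s in Ioi r, sinh (r - s) / s ^ 2 * exp (-3 * s)|
      ≤ ∫ s in Ioi r, |sinh (r - s) / s ^ 2 * exp (-3 * s)| := abs_integral_le_integral_abs
    _ = ∫ s in Ioi r, (s ^ 2)⁻¹ * g s :=
        setIntegral_congr_fun measurableSet_Ioi fun s hs => abs_sinh_sub_div_sq_mul_exp 3 hs.out.le
    _ ≤ ((5 / 2) ^ 2)⁻¹ * ((∫ s in Ioi r, g s) - ∫ s in Ioi (r + 1 / 2), g s) +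
          (3 ^ 2)⁻¹ * ∫ s in Ioi (r + 1 / 2), g s :=
        setIntegral_Ioi_mul_le_of_le_of_le (by linarith) hg
          (fun _ hs => sinh_sub_mul_exp_nonneg hs.out.le)
          (integrableOn_inv_sq_mul_Ioi (by linarith) hg)
          (fun _ hs => inv_sq_le_inv_sq (by norm_num) (hr.trans hs.1.le))
          (fun _ hs => inv_sq_le_inv_sq (by norm_num) (by linarith [hs.out]))
    _ = exp (-r) * (exp (-(2 * r)) * (1 / 50 - 11 / 225 * (exp (-1) / 4 - exp (-2) / 8))) := by
        rw [hT₀, hT₁, show -3 * r = -r + -(2 * r) by ring, exp_add]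
        ring
    _ ≤ exp (-r) * (1 / 8900) := by
        gcongr
        exact exp_neg_mul_le_one_div_8900 (by linarith)
    _ = exp (-r) / 8900 := by ring
end

section
/- Fix λ ∈ [0,1] and set σ := √(1−λ). (a) If u₀ : (0,∞) → ℝ is a twice continuously differentiable solution of −u'' − (2/r)·u' + (1 − λ − 3Q²)·u = 0 on (0,∞) such that r·u₀(r) → 0 and (d/dr)(r·u₀(r)) → c as r → 0⁺ for some c ≠ 0, then every twice continuously differentiable solution v of the same equation whose Wronskian u₀·v' − u₀'·v is nonzero at some point of (0,∞) satisfies ∫_0^1 v(r)² dr = ∞. (b) If u∞ is a twice continuously differentiable solution with lim_{r→∞} r·e^{σr}·u∞(r) = 1, then every solution v whose Wronskian u∞·v' − u∞'·v is nonzero at some point satisfies ∫_1^∞ v(r)² dr = ∞. -/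
open Real Set Filter MeasureTheory Topology

/-!
For two solutions `u`, `v` of `-w'' - (2/r) w' + q w = 0` the quantity `r² (u v' - u' v)` is a
constant `K`, which we may take positive after replacing `v` by `-v`. Wherever `u ≠ 0` this gives
`(v / u)' = K / (r u)²`, and the growth of `v / u` is read off from the size of `u`.

Near `0`, l'Hôpital applied to `r u₀` shows `u₀ → c ≠ 0`, so `(v / u₀)' ≳ 1 / r²`, hence
`v / u₀ ≲ -1 / r` and `v² ≳ 1 / r²`, which is not integrable at `0`.

Near `∞`, `r e^{σ r} u∞ → 1` gives `(v / u∞)' ≳ e^{2σ r} ≥ (r e^{σ r})'` (as `1 + x ≤ eˣ`), hence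
`v / u∞ ≳ r e^{σ r}` and `v` stays bounded away from `0`.
-/

lemma tendsto_nhdsGT_zero_of_tendsto_deriv_mul_self {u : ℝ → ℝ} {c : ℝ}
    (hd : ∀ᶠ r in 𝓝[>] 0, DifferentiableAt ℝ (fun r => r * u r) r)
    (h0 : Tendsto (fun r => r * u r) (𝓝[>] 0) (𝓝 0))
    (h1 : Tendsto (deriv fun r => r * u r) (𝓝[>] 0) (𝓝 c)) :
    Tendsto u (𝓝[>] 0) (𝓝 c) := by
  have h := deriv.lhopital_zero_nhdsGT (g := id) hd (by simp)
    h0 (tendsto_nhdsWithin_of_tendsto_nhds tendsto_id) (by simpa using h1)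
  refine h.congr' (eventually_mem_nhdsWithin.mono fun r (hr : 0 < r) => ?_)
  simp [hr.ne']

lemma eventually_le_half_of_deriv_le_nhdsGT {F G F' G' : ℝ → ℝ} {a : ℝ}
    (h : ∀ᶠ r in 𝓝[>] a, HasDerivAt F (F' r) r ∧ HasDerivAt G (G' r) r ∧ G' r ≤ F' r)
    (hG : Tendsto G (𝓝[>] a) atBot) : ∀ᶠ r in 𝓝[>] a, F r ≤ G r / 2 := by
  obtain ⟨d, hd, hsub⟩ := mem_nhdsGT_iff_exists_Ioo_subset.1 h
  have hmono : MonotoneOn (fun r => F r - G r) (Ioo a d) := by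
    refine monotoneOn_of_hasDerivWithinAt_nonneg (f' := fun r => F' r - G' r) (convex_Ioo a d)
      (fun r hr => ((hsub hr).1.sub (hsub hr).2.1).continuousAt.continuousWithinAt)
      (fun r hr => ?_) (fun r hr => ?_)
    · rw [interior_Ioo] at hr
      exact ((hsub hr).1.sub (hsub hr).2.1).hasDerivWithinAt
    · rw [interior_Ioo] at hr
      exact sub_nonneg.2 (hsub hr).2.2
  set m := (a + d) / 2
  have hm : m ∈ Ioo a d := ⟨left_lt_add_div_two.2 hd, add_div_two_lt_right.2 hd⟩
  filter_upwards [Ioo_mem_nhdsGT hm.1, hG.eventually_le_atBot (-2 * (F m - G m))]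
    with r hr hGr
  have := hmono ⟨hr.1, hr.2.trans hm.2⟩ hm hr.2.le
  linarith

lemma eventually_half_le_of_deriv_le_atTop {F G F' G' : ℝ → ℝ}
    (h : ∀ᶠ r in atTop, HasDerivAt F (F' r) r ∧ HasDerivAt G (G' r) r ∧ G' r ≤ F' r)
    (hG : Tendsto G atTop atTop) : ∀ᶠ r in atTop, G r / 2 ≤ F r := by
  obtain ⟨R, hR⟩ := eventually_atTop.1 h
  have hmono : MonotoneOn (fun r => F r - G r) (Ici R) := by
    refine monotoneOn_of_hasDerivWithinAt_nonneg (f' := fun r => F' r - G' r) (convex_Ici R)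
      (fun r hr => ((hR r hr).1.sub (hR r hr).2.1).continuousAt.continuousWithinAt)
      (fun r hr => ?_) (fun r hr => ?_)
    · rw [interior_Ici] at hr
      exact ((hR r hr.le).1.sub (hR r hr.le).2.1).hasDerivWithinAt
    · rw [interior_Ici] at hr
      exact sub_nonneg.2 (hR r hr.le).2.2
  filter_upwards [eventually_ge_atTop R, hG.eventually_ge_atTop (-2 * (F R - G R))]
    with r hr hGr
  have := hmono self_mem_Ici hr hr
  linarith

lemma lintegral_Ioo_eq_top_of_inv_sq_le {f : ℝ → ℝ} {b t : ℝ} (hb : 0 < b) (ht : 0 < t)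
    (hf : ∀ᶠ r in 𝓝[>] 0, b / r ^ 2 ≤ f r) :
    ∫⁻ r in Ioo 0 t, ENNReal.ofReal (f r) = ⊤ := by
  obtain ⟨ε, hε, hεf⟩ := mem_nhdsGT_iff_exists_Ioo_subset.1 (hf.and (Ioo_mem_nhdsGT ht))
  have hinv : ∫⁻ r in Ioo 0 ε, ENNReal.ofReal (r ^ (-2 : ℝ)) = ⊤ := by
    by_contra hfin
    have : IntegrableOn (fun r : ℝ => r ^ (-2 : ℝ)) (Ioo 0 ε) :=
      (lintegral_ofReal_ne_top_iff_integrable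
        ((continuousOn_id.rpow_const fun r hr => Or.inl hr.1.ne').aestronglyMeasurable
          measurableSet_Ioo)
        ((ae_restrict_iff' measurableSet_Ioo).2
          (.of_forall fun r (hr : r ∈ Ioo 0 ε) => rpow_nonneg hr.1.le _))).1 hfin
    rw [intervalIntegral.integrableOn_Ioo_rpow_iff hε] at this
    norm_num at this
  have hle : ∀ r ∈ Ioo 0 ε, ENNReal.ofReal b * ENNReal.ofReal (r ^ (-2 : ℝ)) ≤
      ENNReal.ofReal (f r) := by
    intro r hr
    rw [← ENNReal.ofReal_mul hb.le, rpow_neg hr.1.le, ← div_eq_mul_inv]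
    exact ENNReal.ofReal_le_ofReal (by exact_mod_cast (hεf hr).1)
  refine top_unique ?_
  calc ⊤ = ENNReal.ofReal b * ∫⁻ r in Ioo 0 ε, ENNReal.ofReal (r ^ (-2 : ℝ)) := by
        rw [hinv, ENNReal.mul_top (by simpa using hb)]
    _ = ∫⁻ r in Ioo 0 ε, ENNReal.ofReal b * ENNReal.ofReal (r ^ (-2 : ℝ)) :=
        (lintegral_const_mul' _ _ ENNReal.ofReal_ne_top).symm
    _ ≤ ∫⁻ r in Ioo 0 ε, ENNReal.ofReal (f r) := setLIntegral_mono' measurableSet_Ioo hle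
    _ ≤ ∫⁻ r in Ioo 0 t, ENNReal.ofReal (f r) :=
        lintegral_mono_set fun r hr => ⟨hr.1, (hεf hr).2.2⟩

lemma lintegral_Ioi_eq_top_of_le {f : ℝ → ℝ} {b a : ℝ} (hb : 0 < b)
    (hf : ∀ᶠ r in atTop, b ≤ f r) :
    ∫⁻ r in Ioi a, ENNReal.ofReal (f r) = ⊤ := by
  obtain ⟨R, hR⟩ := eventually_atTop.1 (hf.and (eventually_gt_atTop a))
  refine top_unique ?_
  calc ⊤ = ∫⁻ _ in Ioi R, ENNReal.ofReal b := by
        rw [setLIntegral_const, Real.volume_Ioi, ENNReal.mul_top (by simpa using hb)]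
    _ ≤ ∫⁻ r in Ioi R, ENNReal.ofReal (f r) :=
        setLIntegral_mono' measurableSet_Ioi fun r hr => ENNReal.ofReal_le_ofReal (hR r hr.le).1
    _ ≤ ∫⁻ r in Ioi a, ENNReal.ofReal (f r) :=
        lintegral_mono_set fun r hr => (hR R le_rfl).2.trans hr

def IsRadialSolution (q u : ℝ → ℝ) : Prop :=
  ContDiffOn ℝ 2 u (Ioi 0) ∧
    ∀ r > (0:ℝ), -(deriv (deriv u) r) - (2 / r) * deriv u r + q r * u r = 0

noncomputable def wronskian (u v : ℝ → ℝ) (r : ℝ) : ℝ := u r * deriv v r - deriv u r * v r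

lemma wronskian_neg_right (u v : ℝ → ℝ) (r : ℝ) : wronskian u (-v) r = -wronskian u v r := by
  simp only [wronskian, deriv.neg', Pi.neg_apply]
  ring

lemma hasDerivAt_div_of_wronskian {u v : ℝ → ℝ} {r : ℝ} (hu : HasDerivAt u (deriv u r) r)
    (hv : HasDerivAt v (deriv v r) r) (hr : u r ≠ 0) :
    HasDerivAt (fun s => v s / u s) (wronskian u v r / u r ^ 2) r :=
  (hv.div hu hr).congr_deriv (by unfold wronskian; ring)

namespace IsRadialSolution

variable {q u v : ℝ → ℝ} {r : ℝ}

lemma hasDerivAt (hu : IsRadialSolution q u) (hr : 0 < r) : HasDerivAt u (deriv u r) r :=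
  ((hu.1.differentiableOn (by norm_num)).differentiableAt (Ioi_mem_nhds hr)).hasDerivAt

lemma hasDerivAt_deriv (hu : IsRadialSolution q u) (hr : 0 < r) :
    HasDerivAt (deriv u) (deriv (deriv u) r) r :=
  (((hu.1.deriv_of_isOpen isOpen_Ioi (by norm_num : (1 : WithTop ℕ∞) + 1 ≤ 2)).differentiableOn
    one_ne_zero).differentiableAt (Ioi_mem_nhds hr)).hasDerivAt

lemma neg (hu : IsRadialSolution q u) : IsRadialSolution q (-u) := by
  refine ⟨hu.1.neg, fun r hr => ?_⟩
  have h := hu.2 r hr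
  simp only [deriv.neg', Pi.neg_apply]
  rw [show deriv (fun x => -deriv u x) r = -deriv (deriv u) r from deriv.neg]
  linarith

lemma sq_mul_wronskian_eq (hu : IsRadialSolution q u) (hv : IsRadialSolution q v) {s : ℝ}
    (hr : 0 < r) (hs : 0 < s) : r ^ 2 * wronskian u v r = s ^ 2 * wronskian u v s := by
  have hderiv : ∀ t ∈ Ioi (0:ℝ), HasDerivAt (fun t => t ^ 2 * wronskian u v t) 0 t := by
    intro t (ht : 0 < t)
    have hW := ((hu.hasDerivAt ht).mul (hv.hasDerivAt_deriv ht)).sub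
      ((hu.hasDerivAt_deriv ht).mul (hv.hasDerivAt ht))
    refine ((hasDerivAt_pow 2 t).mul hW).congr_deriv ?_
    have hu' := hu.2 t ht
    have hv' := hv.2 t ht
    field_simp at hu' hv' ⊢
    simp only [Pi.sub_apply, Pi.mul_apply]
    linear_combination t * (v t * hu' - u t * hv')
  exact isOpen_Ioi.is_const_of_deriv_eq_zero (convex_Ioi 0).isPreconnected
    (fun t ht => (hderiv t ht).differentiableAt.differentiableWithinAt)
    (fun t ht => (hderiv t ht).deriv) hr hs

lemma hasDerivAt_div (hu : IsRadialSolution q u) (hv : IsRadialSolution q v) {r r₁ : ℝ}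
    (hr : 0 < r) (hr₁ : 0 < r₁) (hur : u r ≠ 0) :
    HasDerivAt (fun s => v s / u s) (r₁ ^ 2 * wronskian u v r₁ / (r * u r) ^ 2) r := by
  refine (hasDerivAt_div_of_wronskian (hu.hasDerivAt hr) (hv.hasDerivAt hr) hur).congr_deriv ?_
  rw [← sq_mul_wronskian_eq hu hv hr hr₁]
  field_simp

theorem lintegral_sq_Ioo_eq_top {c : ℝ} (hu : IsRadialSolution q u)
    (hv : IsRadialSolution q v) (hc : c ≠ 0)
    (h0 : Tendsto (fun r => r * u r) (𝓝[>] 0) (𝓝 0))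
    (h1 : Tendsto (deriv fun r => r * u r) (𝓝[>] 0) (𝓝 c))
    (hW : ∃ r > 0, wronskian u v r ≠ 0) :
    ∫⁻ r in Ioo 0 1, ENNReal.ofReal (v r ^ 2) = ⊤ := by
  obtain ⟨r₁, hr₁, hW₁⟩ := hW
  wlog hW₁pos : 0 < wronskian u v r₁ generalizing v
  · have hneg : 0 < wronskian u (-v) r₁ := by
      rw [wronskian_neg_right]
      exact neg_pos.2 ((not_lt.1 hW₁pos).lt_of_ne hW₁)
    simpa using this hv.neg hneg.ne' hneg
  set K := r₁ ^ 2 * wronskian u v r₁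
  have hK : 0 < K := by positivity
  have hu_lim : Tendsto u (𝓝[>] 0) (𝓝 c) :=
    tendsto_nhdsGT_zero_of_tendsto_deriv_mul_self
      (eventually_mem_nhdsWithin.mono fun r (hr : 0 < r) =>
        (hasDerivAt_id r).mul (hu.hasDerivAt hr) |>.differentiableAt) h0 h1
  have hc' : 0 < |c| := abs_pos.2 hc
  have hu_bounds : ∀ᶠ r in 𝓝[>] 0, 0 < r ∧ |c| / 2 < |u r| ∧ |u r| < 2 * |c| :=
    eventually_mem_nhdsWithin.and <|
      (hu_lim.abs.eventually_const_lt (by linarith)).and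
        (hu_lim.abs.eventually_lt_const (by linarith))
  set a := K / (4 * c ^ 2)
  have ha : 0 < a := by positivity
  have hratio : ∀ᶠ r in 𝓝[>] 0, v r / u r ≤ -a * r⁻¹ / 2 := by
    refine eventually_le_half_of_deriv_le_nhdsGT (F' := fun r => K / (r * u r) ^ 2)
      (G := fun r => -a * r⁻¹) (G' := fun r => a / r ^ 2)
      (hu_bounds.mono fun r ⟨hr, hlow, hup⟩ => ?_) ?_
    · have hur : u r ≠ 0 := abs_pos.1 (by linarith)
      refine ⟨hu.hasDerivAt_div hv hr hr₁ hur, ?_, ?_⟩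
      · exact ((hasDerivAt_inv hr.ne').const_mul (-a)).congr_deriv (by ring)
      · have : u r ^ 2 ≤ 4 * c ^ 2 := by nlinarith [sq_abs (u r), sq_abs c, abs_nonneg (u r)]
        rw [mul_pow, div_div]
        exact div_le_div_of_nonneg_left hK.le (by positivity) (by rw [mul_comm]; gcongr)
    · exact tendsto_inv_nhdsGT_zero.const_mul_atTop_of_neg (neg_neg_of_pos ha)
  refine lintegral_Ioo_eq_top_of_inv_sq_le (b := (a * |c| / 4) ^ 2) (by positivity) one_pos ?_
  filter_upwards [hu_bounds, hratio] with r ⟨hr, hlow, _⟩ hrat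
  have hur : u r ≠ 0 := abs_pos.1 (by linarith)
  have hv_abs : a * |c| / 4 / r ≤ |v r| := by
    rw [← div_mul_cancel₀ (v r) hur, abs_mul]
    have : a / (2 * r) ≤ |v r / u r| := by
      rw [le_abs]; right
      have : -a * r⁻¹ / 2 = -(a / (2 * r)) := by field_simp
      linarith
    calc a * |c| / 4 / r = a / (2 * r) * (|c| / 2) := by field_simp; ring
      _ ≤ |v r / u r| * |u r| := by gcongr
  calc (a * |c| / 4) ^ 2 / r ^ 2 = (a * |c| / 4 / r) ^ 2 := by ring
    _ ≤ |v r| ^ 2 := by gcongr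
    _ = v r ^ 2 := sq_abs _

theorem lintegral_sq_Ioi_eq_top {σ : ℝ} (hσ : 0 ≤ σ) (hu : IsRadialSolution q u)
    (hv : IsRadialSolution q v)
    (hlim : Tendsto (fun r => r * exp (σ * r) * u r) atTop (𝓝 1))
    (hW : ∃ r > 0, wronskian u v r ≠ 0) :
    ∫⁻ r in Ioi 1, ENNReal.ofReal (v r ^ 2) = ⊤ := by
  obtain ⟨r₁, hr₁, hW₁⟩ := hW
  wlog hW₁pos : 0 < wronskian u v r₁ generalizing v
  · have hneg : 0 < wronskian u (-v) r₁ := by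
      rw [wronskian_neg_right]
      exact neg_pos.2 ((not_lt.1 hW₁pos).lt_of_ne hW₁)
    simpa using this hv.neg hneg.ne' hneg
  set K := r₁ ^ 2 * wronskian u v r₁
  have hK : 0 < K := by positivity
  have hbounds : ∀ᶠ r in atTop, 0 < r ∧ 0 < u r ∧ 1 / 2 < r * exp (σ * r) * u r ∧
      r * exp (σ * r) * u r < 2 := by
    filter_upwards [eventually_gt_atTop 0, hlim.eventually_const_lt (by norm_num : (1:ℝ) / 2 < 1),
      hlim.eventually_lt_const (by norm_num : (1:ℝ) < 2)] with r hr hlow hup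
    exact ⟨hr, pos_of_mul_pos_right (a := r * exp (σ * r)) (by linarith) (by positivity), hlow, hup⟩
  have hρ : Tendsto (fun r => K / 4 * (r * exp (σ * r))) atTop atTop := by
    refine Tendsto.const_mul_atTop (by positivity) (tendsto_atTop_mono' _ ?_ tendsto_id)
    filter_upwards [eventually_ge_atTop 0] with r hr
    exact le_mul_of_one_le_right hr (one_le_exp (by positivity))
  have hratio : ∀ᶠ r in atTop, K / 4 * (r * exp (σ * r)) / 2 ≤ v r / u r := by
    refine eventually_half_le_of_deriv_le_atTop (F' := fun r => K / (r * u r) ^ 2)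
      (G' := fun r => K / 4 * (exp (σ * r) * (1 + σ * r)))
      (hbounds.mono fun r ⟨hr, hur, hlow, hup⟩ => ?_) hρ
    refine ⟨hu.hasDerivAt_div hv hr hr₁ hur.ne', ?_, ?_⟩
    · have := ((hasDerivAt_id r).mul (((hasDerivAt_id r).const_mul σ).exp)).const_mul (K / 4)
      exact this.congr_deriv (by simp only [id]; ring)
    · have hexp : 1 + σ * r ≤ exp (σ * r) := by linarith [add_one_le_exp (σ * r)]
      have hsq : (r * exp (σ * r) * u r) ^ 2 ≤ 2 ^ 2 := by gcongr
      rw [le_div_iff₀ (by positivity)]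
      calc K / 4 * (exp (σ * r) * (1 + σ * r)) * (r * u r) ^ 2
          ≤ K / 4 * (exp (σ * r) * exp (σ * r)) * (r * u r) ^ 2 := by gcongr
        _ = K / 4 * (r * exp (σ * r) * u r) ^ 2 := by ring
        _ ≤ K / 4 * 2 ^ 2 := by gcongr
        _ = K := by ring
  refine lintegral_Ioi_eq_top_of_le (b := (K / 16) ^ 2) (by positivity) ?_
  filter_upwards [hbounds, hratio] with r ⟨hr, hur, hlow, _⟩ hrat
  have hv_low : K / 16 ≤ v r :=
    calc K / 16 = K / 8 * (1 / 2) := by ring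
      _ ≤ K / 8 * (r * exp (σ * r) * u r) := by gcongr
      _ = K / 4 * (r * exp (σ * r)) / 2 * u r := by ring
      _ ≤ v r / u r * u r := by gcongr
      _ = v r := div_mul_cancel₀ _ hur.ne'
  exact pow_le_pow_left₀ (by positivity) hv_low 2

end IsRadialSolution

theorem L_plus_independent_solutions_not_L2_general
    (Q : ℝ → ℝ)
    (lam : ℝ)
    (σ : ℝ) (hσ : σ = Real.sqrt (1 - lam)) :
    (∀ u₀ v : ℝ → ℝ, ∀ c : ℝ, c ≠ 0 →
      ContDiffOn ℝ 2 u₀ (Set.Ioi 0) →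
      (∀ r > (0:ℝ),
        -(deriv (deriv u₀) r) - (2 / r) * deriv u₀ r + (1 - lam - 3 * (Q r) ^ 2) * u₀ r = 0) →
      Filter.Tendsto (fun r => r * u₀ r) (nhdsWithin 0 (Set.Ioi 0)) (nhds 0) →
      Filter.Tendsto (deriv fun r => r * u₀ r) (nhdsWithin 0 (Set.Ioi 0)) (nhds c) →
      ContDiffOn ℝ 2 v (Set.Ioi 0) →
      (∀ r > (0:ℝ),
        -(deriv (deriv v) r) - (2 / r) * deriv v r + (1 - lam - 3 * (Q r) ^ 2) * v r = 0) →
      (∃ r > (0:ℝ), u₀ r * deriv v r - deriv u₀ r * v r ≠ 0) →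
      ∫⁻ r in Set.Ioo (0:ℝ) 1, ENNReal.ofReal ((v r) ^ 2) = ⊤) ∧
    (∀ uInf v : ℝ → ℝ,
      ContDiffOn ℝ 2 uInf (Set.Ioi 0) →
      (∀ r > (0:ℝ),
        -(deriv (deriv uInf) r) - (2 / r) * deriv uInf r
          + (1 - lam - 3 * (Q r) ^ 2) * uInf r = 0) →
      Filter.Tendsto (fun r => r * Real.exp (σ * r) * uInf r) Filter.atTop (nhds 1) →
      ContDiffOn ℝ 2 v (Set.Ioi 0) →
      (∀ r > (0:ℝ),
        -(deriv (deriv v) r) - (2 / r) * deriv v r + (1 - lam - 3 * (Q r) ^ 2) * v r = 0) →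
      (∃ r > (0:ℝ), uInf r * deriv v r - deriv uInf r * v r ≠ 0) →
      ∫⁻ r in Set.Ioi (1:ℝ), ENNReal.ofReal ((v r) ^ 2) = ⊤) := by
  refine ⟨fun u₀ v c hc hu hode h0 h1 hv hvode hW => ?_,
    fun uInf v hu hode hlim hv hvode hW => ?_⟩
  · exact IsRadialSolution.lintegral_sq_Ioo_eq_top ⟨hu, hode⟩ ⟨hv, hvode⟩ hc h0 h1 hW
  · exact IsRadialSolution.lintegral_sq_Ioi_eq_top (hσ ▸ sqrt_nonneg _) ⟨hu, hode⟩ ⟨hv, hvode⟩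
      hlim hW

/-- Non-`L²` behaviour of solutions of `L₊ u = λ u` which are linearly independent of the
distinguished solutions: (a) any solution `v` whose Wronskian with the solution `u₀`
regular at the origin does not vanish fails to be square integrable near `0`; (b) any
solution `v` whose Wronskian with the decaying solution `u∞` does not vanish fails to be
square integrable near `∞`. -/
theorem L_plus_independent_solutions_not_L2
    (Q : ℝ → ℝ)
    (hQreg : ContDiffOn ℝ 2 Q (Set.Ioi 0))
    (hQpos : ∀ r > (0:ℝ), 0 < Q r)
    (hQode : ∀ r > (0:ℝ), -(deriv (deriv Q) r) - (2 / r) * deriv Q r + Q r - (Q r) ^ 3 = 0)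
    (hQbdd : ∃ C : ℝ, ∀ r ∈ Set.Ioc (0:ℝ) 1, |Q r| ≤ C)
    (hQlim : Filter.Tendsto Q Filter.atTop (nhds 0))
    (lam : ℝ) (hlam : lam ∈ Set.Icc (0:ℝ) 1)
    (σ : ℝ) (hσ : σ = Real.sqrt (1 - lam)) :
    (∀ u₀ v : ℝ → ℝ, ∀ c : ℝ, c ≠ 0 →
      ContDiffOn ℝ 2 u₀ (Set.Ioi 0) →
      (∀ r > (0:ℝ),
        -(deriv (deriv u₀) r) - (2 / r) * deriv u₀ r + (1 - lam - 3 * (Q r) ^ 2) * u₀ r = 0) →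
      Filter.Tendsto (fun r => r * u₀ r) (nhdsWithin 0 (Set.Ioi 0)) (nhds 0) →
      Filter.Tendsto (deriv fun r => r * u₀ r) (nhdsWithin 0 (Set.Ioi 0)) (nhds c) →
      ContDiffOn ℝ 2 v (Set.Ioi 0) →
      (∀ r > (0:ℝ),
        -(deriv (deriv v) r) - (2 / r) * deriv v r + (1 - lam - 3 * (Q r) ^ 2) * v r = 0) →
      (∃ r > (0:ℝ), u₀ r * deriv v r - deriv u₀ r * v r ≠ 0) →
      ∫⁻ r in Set.Ioo (0:ℝ) 1, ENNReal.ofReal ((v r) ^ 2) = ⊤) ∧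
    (∀ uInf v : ℝ → ℝ,
      ContDiffOn ℝ 2 uInf (Set.Ioi 0) →
      (∀ r > (0:ℝ),
        -(deriv (deriv uInf) r) - (2 / r) * deriv uInf r
          + (1 - lam - 3 * (Q r) ^ 2) * uInf r = 0) →
      Filter.Tendsto (fun r => r * Real.exp (σ * r) * uInf r) Filter.atTop (nhds 1) →
      ContDiffOn ℝ 2 v (Set.Ioi 0) →
      (∀ r > (0:ℝ),
        -(deriv (deriv v) r) - (2 / r) * deriv v r + (1 - lam - 3 * (Q r) ^ 2) * v r = 0) →
      (∃ r > (0:ℝ), uInf r * deriv v r - deriv uInf r * v r ≠ 0) →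
      ∫⁻ r in Set.Ioi (1:ℝ), ENNReal.ofReal ((v r) ^ 2) = ⊤) :=
  L_plus_independent_solutions_not_L2_general Q lam σ hσ
end
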